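/- Let w_de ≠ 0 and β be real constants, and consider the interacting two-fluid system x' = -x(-3w_de·y + x + y - 1) - 3βy, y' = -y(-3w_de(y-1) + x + y - 1) + 3βy. Then: (i) the point B = (β/w_de, 1 - β/w_de) is a zero of the vector field; (ii) the effective equation of state w_eff = (1/3)[1 - x + (3w_de - 1)y] evaluated at B equals w_de - β; (iii) the Jacobian matrix at B has eigenvalues 3(w_de - β) and 3(w_de - β) - 1; (iv) hence B is a hyperbolic sink (an attracting accelerating scaling solution candidate) if and only if w_de < β, a saddle if β < w_de < β + 1/3, and a hyperbolic source if w_de > β + 1/3. -/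
import Mathlib


open Polynomial

/-- `x`-component of the interacting two-fluid vector field (coupling `Q = 3βHρ_de`). -/
noncomputable def f13 (wde β x y : ℝ) : ℝ := -x * (-3 * wde * y + x + y - 1) - 3 * β * y

/-- `y`-component of the interacting two-fluid vector field (coupling `Q = 3βHρ_de`). -/
noncomputable def g13 (wde β x y : ℝ) : ℝ := -y * (-3 * wde * (y - 1) + x + y - 1) + 3 * β * y

/-- Jacobian matrix of the interacting two-fluid vector field at a point `p`. -/
noncomputable def jac13 (wde β : ℝ) (p : ℝ × ℝ) : Matrix (Fin 2) (Fin 2) ℝ :=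
  !![deriv (fun x => f13 wde β x p.2) p.1, deriv (fun y => f13 wde β p.1 y) p.2;
     deriv (fun x => g13 wde β x p.2) p.1, deriv (fun y => g13 wde β p.1 y) p.2]

lemma deriv_quad (a c d t : ℝ) : deriv (fun s : ℝ => a * s ^ 2 + c * s + d) t = 2 * a * t + c := by
  have h1 : HasDerivAt (fun s : ℝ => s ^ 2) (2 * t) t := by
    simpa using hasDerivAt_pow 2 t
  have h : HasDerivAt (fun s : ℝ => a * s ^ 2 + c * s + d) (a * (2 * t) + c * 1) t :=
    ((h1.const_mul a).add ((hasDerivAt_id t).const_mul c)).add_const d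
  rw [h.deriv]; ring

lemma charpoly_fin_two' (M : Matrix (Fin 2) (Fin 2) ℝ) :
    M.charpoly = X ^ 2 - C (M 0 0 + M 1 1) * X + C (M 0 0 * M 1 1 - M 0 1 * M 1 0) := by
  rw [Matrix.charpoly, Matrix.det_fin_two, Matrix.charmatrix_apply_eq, Matrix.charmatrix_apply_eq,
      Matrix.charmatrix_apply_ne _ _ _ (by decide), Matrix.charmatrix_apply_ne _ _ _ (by decide),
      map_add, map_sub, map_mul, map_mul]
  ring

lemma quad_factor (a b : ℝ) :
    (X : ℝ[X]) ^ 2 - C (a + b) * X + C (a * b) = (X - C a) * (X - C b) := by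
  rw [map_add, map_mul]; ring

/-- The interacting dark energy scaling point `B = (β/w_de, 1-β/w_de)`: it is a fixed point,
`w_eff(B) = w_de - β`, the Jacobian eigenvalues are `3(w_de-β)` and `3(w_de-β)-1`; hence `B`
is a hyperbolic sink iff `w_de < β`, a saddle if `β < w_de < β+1/3`, and a hyperbolic source
if `w_de > β+1/3`. -/
theorem interacting_fluids_point_B (wde β : ℝ) (hw : wde ≠ 0) :
    (f13 wde β (β / wde) (1 - β / wde) = 0 ∧ g13 wde β (β / wde) (1 - β / wde) = 0) ∧
    (1 / 3 * (1 - β / wde + (3 * wde - 1) * (1 - β / wde)) = wde - β) ∧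
    ((jac13 wde β (β / wde, 1 - β / wde)).charpoly
        = (X - C (3 * (wde - β))) * (X - C (3 * (wde - β) - 1))) ∧
    ((wde < β ↔ 3 * (wde - β) < 0 ∧ 3 * (wde - β) - 1 < 0) ∧
      (β < wde ∧ wde < β + 1 / 3 → 0 < 3 * (wde - β) ∧ 3 * (wde - β) - 1 < 0) ∧
      (β + 1 / 3 < wde → 0 < 3 * (wde - β) ∧ 0 < 3 * (wde - β) - 1)) := by
  set u : ℝ := β / wde with hu
  have hb : β = u * wde := by rw [hu]; field_simp
  refine ⟨⟨?_, ?_⟩, ?_, ?_, ?_⟩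
  · simp only [f13]; rw [hb]; ring
  · simp only [g13]; rw [hb]; ring
  · rw [hb]; ring
  · -- characteristic polynomial
    have e11 : (fun x => f13 wde β x (1 - u)) =
        fun x => (-1) * x ^ 2 + (3 * wde * (1 - u) - (1 - u) + 1) * x + (-(3 * β * (1 - u))) := by
      funext x; simp only [f13]; ring
    have e12 : (fun y => f13 wde β u y) =
        fun y => (0 : ℝ) * y ^ 2 + (3 * wde * u - u - 3 * β) * y + (-u ^ 2 + u) := by
      funext y; simp only [f13]; ring
    have e21 : (fun x => g13 wde β x (1 - u)) =
        fun x => (0 : ℝ) * x ^ 2 + (-(1 - u)) * x +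
          (-(1 - u) * (-3 * wde * ((1 - u) - 1) + (1 - u) - 1) + 3 * β * (1 - u)) := by
      funext x; simp only [g13]; ring
    have e22 : (fun y => g13 wde β u y) =
        fun y => (3 * wde - 1) * y ^ 2 + (1 - 3 * wde - u + 3 * β) * y + 0 := by
      funext y; simp only [g13]; ring
    have hjac : jac13 wde β (u, 1 - u) =
        !![2 * (-1) * u + (3 * wde * (1 - u) - (1 - u) + 1), 3 * wde * u - u - 3 * β;
           -(1 - u), 2 * (3 * wde - 1) * (1 - u) + (1 - 3 * wde - u + 3 * β)] := by
      simp only [jac13, e11, e12, e21, e22, deriv_quad]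
      norm_num
    have h1 : (2 * (-1) * u + (3 * wde * (1 - u) - (1 - u) + 1)) +
        (2 * (3 * wde - 1) * (1 - u) + (1 - 3 * wde - u + 3 * β)) =
        3 * (wde - β) + (3 * (wde - β) - 1) := by rw [hb]; ring
    have h2 : (2 * (-1) * u + (3 * wde * (1 - u) - (1 - u) + 1)) *
        (2 * (3 * wde - 1) * (1 - u) + (1 - 3 * wde - u + 3 * β)) -
        (3 * wde * u - u - 3 * β) * (-(1 - u)) =
        3 * (wde - β) * (3 * (wde - β) - 1) := by rw [hb]; ring
    rw [hjac, charpoly_fin_two', ← quad_factor]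
    rw [show (!![2 * (-1) * u + (3 * wde * (1 - u) - (1 - u) + 1), 3 * wde * u - u - 3 * β;
           -(1 - u), 2 * (3 * wde - 1) * (1 - u) + (1 - 3 * wde - u + 3 * β)] :
           Matrix (Fin 2) (Fin 2) ℝ) 0 0 = 2 * (-1) * u + (3 * wde * (1 - u) - (1 - u) + 1) from rfl,
        show (!![2 * (-1) * u + (3 * wde * (1 - u) - (1 - u) + 1), 3 * wde * u - u - 3 * β;
           -(1 - u), 2 * (3 * wde - 1) * (1 - u) + (1 - 3 * wde - u + 3 * β)] :
           Matrix (Fin 2) (Fin 2) ℝ) 1 1 = 2 * (3 * wde - 1) * (1 - u) + (1 - 3 * wde - u + 3 * β) from rfl,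
        show (!![2 * (-1) * u + (3 * wde * (1 - u) - (1 - u) + 1), 3 * wde * u - u - 3 * β;
           -(1 - u), 2 * (3 * wde - 1) * (1 - u) + (1 - 3 * wde - u + 3 * β)] :
           Matrix (Fin 2) (Fin 2) ℝ) 0 1 = 3 * wde * u - u - 3 * β from rfl,
        show (!![2 * (-1) * u + (3 * wde * (1 - u) - (1 - u) + 1), 3 * wde * u - u - 3 * β;
           -(1 - u), 2 * (3 * wde - 1) * (1 - u) + (1 - 3 * wde - u + 3 * β)] :
           Matrix (Fin 2) (Fin 2) ℝ) 1 0 = -(1 - u) from rfl,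
        h1, h2]
  · refine ⟨⟨fun h => ⟨by linarith, by linarith⟩, fun ⟨h1, h2⟩ => by linarith⟩,
      fun ⟨h1, h2⟩ => ⟨by linarith, by linarith⟩,
      fun h => ⟨by linarith, by linarith⟩⟩
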